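/- For every m ∈ ℕ and p ∈ (0,1) the following identities hold, where ρ(x,y) := 1 − g(x,y) and ρ₁(x) := ∫ ρ(x,y) dμ_{m,p}(y) = (1−p)^{|x|}: (1) ∫ ρ₁(x)⁴ dμ_{m,p}(x) = (1 − p + p(1−p)⁴)^m, and this quantity equals the probability that a fixed copy of the star K_{1,4} is a subgraph of the complement of G(n,m,p); (2) ∫∫ ( ∫ ρ(x,y₁) ρ(x,y₂) dμ_{m,p}(x) )² dμ_{m,p}(y₁) dμ_{m,p}(y₂) = ( (1−p)⁴ + 4p(1−p)³ + 2p²(1−p)² )^m; (3) ∫ ( ∫ ρ₁(x) ρ(x,y) dμ_{m,p}(x) )² dμ_{m,p}(y) = ( (1−p)⁵ + 5p(1−p)⁴ + 6p²(1−p)³ + p³(1−p)² )^m; (4) ∫ ρ₁(x)² dμ_{m,p}(x) = (1 − 2p² + p³)^m. -/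

import Mathlib

open Finset MeasureTheory ProbabilityTheory Filter Topology

namespace RIG

noncomputable section

/-- `{0,1}^m`, the space of attribute vectors. -/
abbrev V (m : ℕ) : Type := Fin m → Bool

/-- The `Bernoulli(p)^{⊗ m}` weight of `x ∈ {0,1}^m`, i.e. `μ_{m,p}({x})`. -/
def bw (m : ℕ) (p : ℝ) (x : V m) : ℝ := ∏ i : Fin m, if x i then p else 1 - p

/-- The `μ_{m,p}^{⊗ k}` weight of a `k`-tuple of attribute vectors. -/
def bwk (m k : ℕ) (p : ℝ) (x : Fin k → V m) : ℝ := ∏ j : Fin k, bw m p (x j)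

/-- Integral with respect to `μ_{m,p}^{⊗ k}`. -/
def intk (m k : ℕ) (p : ℝ) (F : (Fin k → V m) → ℝ) : ℝ :=
  ∑ x : Fin k → V m, bwk m k p x * F x

/-- Squared `L²(μ_{m,p}^{⊗ k})` norm. -/
def normSq (m k : ℕ) (p : ℝ) (F : (Fin k → V m) → ℝ) : ℝ :=
  intk m k p fun x => F x ^ 2

/-- The underlying probability space of `G(n,m,p)`: each of the `n` vertices
chooses an attribute vector in `{0,1}^m`. -/
abbrev Om (n m : ℕ) : Type := Fin n → V m

/-- Probability weight of a sample point `ω`. -/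
def Wt (n m : ℕ) (p : ℝ) (ω : Om n m) : ℝ := ∏ k : Fin n, bw m p (ω k)

/-- Expectation of a random variable on `Om n m`. -/
def EE (n m : ℕ) (p : ℝ) (F : Om n m → ℝ) : ℝ := ∑ ω : Om n m, Wt n m p ω * F ω

/-- Variance of a random variable on `Om n m`. -/
def VarE (n m : ℕ) (p : ℝ) (F : Om n m → ℝ) : ℝ :=
  EE n m p fun ω => (F ω - EE n m p F) ^ 2

/-- Probability of an event. -/
def Pr (n m : ℕ) (p : ℝ) (s : Set (Om n m)) : ℝ :=
  ∑ ω : Om n m, Set.indicator s (Wt n m p) ω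

/-- Standardisation of a random variable. -/
def std (n m : ℕ) (p : ℝ) (F : Om n m → ℝ) (ω : Om n m) : ℝ :=
  (F ω - EE n m p F) / Real.sqrt (VarE n m p F)

/-- The standard normal CDF. -/
def Phi (t : ℝ) : ℝ := (gaussianReal 0 1 (Set.Iic t)).toReal

/-- Kolmogorov distance between (the law of) `F` and the standard normal. -/
def dK (n m : ℕ) (p : ℝ) (F : Om n m → ℝ) : ℝ :=
  ⨆ t : ℝ, |Pr n m p {ω | F ω ≤ t} - Phi t|

/-- Wasserstein distance between (the law of) `F` and the standard normal. -/
def dW (n m : ℕ) (p : ℝ) (F : Om n m → ℝ) : ℝ :=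
  ⨆ h : {h : ℝ → ℝ // LipschitzWith 1 h},
    |EE n m p (fun ω => h.1 (F ω)) - ∫ x, h.1 x ∂(gaussianReal 0 1)|

/-- `d_{K/W}`: the maximum of the Kolmogorov and Wasserstein distances. -/
def dKW (n m : ℕ) (p : ℝ) (F : Om n m → ℝ) : ℝ := max (dK n m p F) (dW n m p F)

/-- The edge probability `p̂ = 1 - (1-p²)^m`. -/
def phat (m : ℕ) (p : ℝ) : ℝ := 1 - (1 - p ^ 2) ^ m

/-- The number of edges of `G(n,m,p)`: two vertices are adjacent iff they share
a chosen attribute. -/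
def NE (n m : ℕ) (ω : Om n m) : ℝ :=
  ∑ k : Fin n, ∑ l : Fin n,
    if k < l ∧ ∃ a : Fin m, ω k a ∧ ω l a then 1 else 0


/-- Assemble `k` variables from three blocks: the first `a` from `w`, the next
`b - a` from `x` and the last `k - b` from `y`. -/
def asm3 {m : ℕ} (a b k : ℕ) (w : Fin a → V m) (x : Fin (b - a) → V m)
    (y : Fin (k - b) → V m) : Fin k → V m := fun i =>
  if h1 : (i : ℕ) < a then w ⟨i, h1⟩
  else if h2 : (i : ℕ) < b then x ⟨(i : ℕ) - a, by omega⟩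
  else y ⟨(i : ℕ) - b, by have := i.isLt; omega⟩

/-- The contraction `f *_b^a g` of `f : (V m)^k → ℝ` and `g : (V m)^l → ℝ`:
the first `a` variables are shared and integrated out, the next `b - a`
variables are shared, and the remaining variable blocks are separate. -/
def contract (m : ℕ) (p : ℝ) (k l a b : ℕ)
    (f : (Fin k → V m) → ℝ) (g : (Fin l → V m) → ℝ)
    (x : Fin (b - a) → V m) (y : Fin (k - b) → V m) (z : Fin (l - b) → V m) : ℝ :=
  ∑ w : Fin a → V m, bwk m a p w * (f (asm3 a b k w x y) * g (asm3 a b l w x z))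

/-- Squared `L²` norm `‖f *_b^a g‖₂²` of a contraction. -/
def contractNormSq (m : ℕ) (p : ℝ) (k l a b : ℕ)
    (f : (Fin k → V m) → ℝ) (g : (Fin l → V m) → ℝ) : ℝ :=
  ∑ x : Fin (b - a) → V m, ∑ y : Fin (k - b) → V m, ∑ z : Fin (l - b) → V m,
    bwk m (b - a) p x * bwk m (k - b) p y * bwk m (l - b) p z *
      contract m p k l a b f g x y z ^ 2

/-- `L²` norm `‖f *_b^a g‖₂` of a contraction. -/
def contractNorm (m : ℕ) (p : ℝ) (k l a b : ℕ)
    (f : (Fin k → V m) → ℝ) (g : (Fin l → V m) → ℝ) : ℝ :=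
  Real.sqrt (contractNormSq m p k l a b f g)

/-- `h_j`: integrating out the last `r - j` variables of `h`. -/
def marg (m r j : ℕ) (p : ℝ) (h : (Fin r → V m) → ℝ) (x : Fin j → V m) : ℝ :=
  ∑ y : Fin (r - j) → V m, bwk m (r - j) p y *
    h fun i =>
      if hi : (i : ℕ) < j then x ⟨i, hi⟩
      else y ⟨(i : ℕ) - j, by have := i.isLt; omega⟩

/-- The centralization `f̄ = f - ∫ f dμ^{⊗k}`. -/
def center (m k : ℕ) (p : ℝ) (f : (Fin k → V m) → ℝ) : (Fin k → V m) → ℝ :=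
  fun x => f x - intk m k p f

/-- `Φ_{x_i} f`: centralization of `f` in the `i`-th coordinate. -/
def phiC (m k : ℕ) (p : ℝ) (i : Fin k) (f : (Fin k → V m) → ℝ) :
    (Fin k → V m) → ℝ :=
  fun x => f x - ∑ t : V m, bw m p t * f (Function.update x i t)

/-- The coordinate-wise centralization `f̈ = Φ_{x₁} ⋯ Φ_{x_k} f`. -/
def ddot (m k : ℕ) (p : ℝ) (f : (Fin k → V m) → ℝ) : (Fin k → V m) → ℝ :=
  (List.finRange k).foldr (phiC m k p) f

/-- The U-statistic `X = ∑_{1 ≤ k₁ < … < k_r ≤ n} h(A^{(k₁)}, …, A^{(k_r)})`. -/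
def Ustat (n m r : ℕ) (h : (Fin r → V m) → ℝ) (ω : Om n m) : ℝ :=
  ∑ s : {s : Finset (Fin n) // s.card = r}, h fun i => ω (s.1.orderEmbOfFin s.2 i)


/-- The attribute `a` *builds* the set `C ⊆ V(H)` (where `S = V(H)`): all
vertices of `C` chose `a` and no other vertex of `S` chose `a`. -/
def Builds (n m : ℕ) (ω : Om n m) (a : Fin m) (S C : Finset (Fin n)) : Prop :=
  (∀ v ∈ C, ω v a = true) ∧ ∀ v ∈ S, v ∉ C → ω v a = false

/-- `𝒫(H)`: the family of subsets of `S = V(H)` containing both endpoints of at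
least one edge of `H` (edges given by the family `E` of `2`-element sets). -/
def Pcal (n : ℕ) (S : Finset (Fin n)) (E : Finset (Finset (Fin n))) :
    Finset (Finset (Fin n)) :=
  S.powerset.filter fun C => ∃ e ∈ E, e ⊆ C

/-- `𝒞` is a clique cover of the graph `H = (S, E)`. -/
def IsCliqueCover (n : ℕ) (S : Finset (Fin n)) (E : Finset (Finset (Fin n)))
    (𝒞 : Finset (Finset (Fin n))) : Prop :=
  𝒞 ⊆ Pcal n S E ∧ ∀ e ∈ E, ∃ C ∈ 𝒞, e ⊆ C

/-- `H = (S, E)` is *given by* the clique cover `𝒞` in `G(n,m,p)`: every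
`C ∈ 𝒞` is built by some attribute and no member of `𝒫(H) \ 𝒞` is built by
any attribute. -/
def GivenBy (n m : ℕ) (ω : Om n m) (S : Finset (Fin n))
    (E : Finset (Finset (Fin n))) (𝒞 : Finset (Finset (Fin n))) : Prop :=
  (∀ C ∈ 𝒞, ∃ a : Fin m, Builds n m ω a S C) ∧
    ∀ C ∈ Pcal n S E, C ∉ 𝒞 → ∀ a : Fin m, ¬Builds n m ω a S C

/-- `π(H, 𝒞)`: probability that `H` is given by precisely the clique cover `𝒞`. -/
def piCC (n m : ℕ) (p : ℝ) (S : Finset (Fin n)) (E : Finset (Finset (Fin n)))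
    (𝒞 : Finset (Finset (Fin n))) : ℝ :=
  Pr n m p {ω | GivenBy n m ω S E 𝒞}

/-- `π(H, 𝒞₊, 𝒞₋)`: probability that `H` is given by some clique cover `𝒞`
with `𝒞₊ ⊆ 𝒞 ⊆ 𝒫(H) \ 𝒞₋`. -/
def piPM (n m : ℕ) (p : ℝ) (S : Finset (Fin n)) (E : Finset (Finset (Fin n)))
    (Cp Cm : Finset (Finset (Fin n))) : ℝ :=
  Pr n m p {ω | ∃ 𝒞 : Finset (Finset (Fin n)),
    Cp ⊆ 𝒞 ∧ 𝒞 ⊆ Pcal n S E \ Cm ∧ IsCliqueCover n S E 𝒞 ∧ GivenBy n m ω S E 𝒞}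

/-- `p_C = p^{|C|} (1-p)^{|V(H)| - |C|}`. -/
def pC (n : ℕ) (p : ℝ) (S C : Finset (Fin n)) : ℝ :=
  p ^ C.card * (1 - p) ^ (S.card - C.card)

open Classical in
/-- The family `𝒦(F,G)` of all clique covers `𝒞` of `F ∪ G` with
`E(G) ⊆ 𝒞 ⊆ 𝒫(F ∪ G) \ E(F)`. -/
def Kfam (n : ℕ) (S : Finset (Fin n)) (EF EG : Finset (Finset (Fin n))) :
    Finset (Finset (Finset (Fin n))) :=
  (Pcal n S (EF ∪ EG)).powerset.filter fun 𝒞 =>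
    IsCliqueCover n S (EF ∪ EG) 𝒞 ∧ EG ⊆ 𝒞 ∧ Disjoint 𝒞 EF


/-- The edge kernel `g(x,y) = 1` iff `x` and `y` share a common attribute. -/
def gfun (m : ℕ) (x y : V m) : ℝ := if ∃ i : Fin m, x i ∧ y i then 1 else 0

/-- `g₁(x) = ∫ g(x,y) dμ_{m,p}(y)`. -/
def g1 (m : ℕ) (p : ℝ) (x : V m) : ℝ := ∑ y : V m, bw m p y * gfun m x y

/-- `ḡ₁ = g₁ - p̂`. -/
def gbar1 (m : ℕ) (p : ℝ) (x : V m) : ℝ := g1 m p x - phat m p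

/-- `ḡ₂(x,y) = g(x,y) - p̂`. -/
def gbar2 (m : ℕ) (p : ℝ) (x y : V m) : ℝ := gfun m x y - phat m p

/-- `ρ = 1 - g`. -/
def rho (m : ℕ) (x y : V m) : ℝ := 1 - gfun m x y

/-- `ρ₁(x) = ∫ ρ(x,y) dμ_{m,p}(y)`. -/
def rho1 (m : ℕ) (p : ℝ) (x : V m) : ℝ := ∑ y : V m, bw m p y * rho m x y

/-- The probability that all the (ordered-pair) edges in `Ed` are present in
`G(n,m,p)`, i.e. `P(H ⊆ G(n,m,p))` for the graph `H` with edge set `Ed`. -/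
def piSub (n m : ℕ) (p : ℝ) (Ed : Finset (Fin n × Fin n)) : ℝ :=
  Pr n m p {ω | ∀ e ∈ Ed, ∃ a : Fin m, ω e.1 a ∧ ω e.2 a}

/-- The set of vertices used by the edge set `Ed`. -/
def supp (n : ℕ) (Ed : Finset (Fin n × Fin n)) : Finset (Fin n) :=
  Ed.image Prod.fst ∪ Ed.image Prod.snd

/-- Edge pattern of `G₁ ≅ K_{1,4}` on `8` labels: edge `k` joins the centre `0`
with the leaf `k+1`. -/
def edg1 (k : Fin 4) : Fin 8 × Fin 8 := (0, ⟨(k : ℕ) + 1, by omega⟩)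

/-- Edge pattern of `G₂ ≅ C₄` on `8` labels: edge `k = (a,b)` joins `v_a = a`
with `u_b = 2 + b`, where `a = k / 2` and `b = k % 2`. -/
def edg2 (k : Fin 4) : Fin 8 × Fin 8 :=
  (⟨(k : ℕ) / 2, by omega⟩, ⟨2 + (k : ℕ) % 2, by omega⟩)

/-- Edge pattern of `G₃ ≅ P₅` (path `z₁–x₁–y–x₂–z₂` with `y = 0`, `x₁ = 1`,
`x₂ = 2`, `z₁ = 3`, `z₂ = 4`): edges `e₁₁ = {x₁,y}`, `e₁₂ = {x₁,z₁}`,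
`e₂₁ = {x₂,y}`, `e₂₂ = {x₂,z₂}`. -/
def edg3 : Fin 4 → Fin 8 × Fin 8 := ![(1, 0), (1, 3), (2, 0), (2, 4)]

/-- The edges of `G_{i,I}` inside `Fin n`, via the injection `v`. -/
def bedg (n : ℕ) (v : Fin 8 → Fin n) (edg : Fin 4 → Fin 8 × Fin 8)
    (I : Finset (Fin 4)) : Finset (Fin n × Fin n) :=
  I.image fun k => (v (edg k).1, v (edg k).2)

/-- The edges of `H_{i,I}`: the edges of `G_{i,I}` together with the isolated
edges `iso I k`, `k ∉ I`. -/
def Hset (n : ℕ) (v : Fin 8 → Fin n) (edg : Fin 4 → Fin 8 × Fin 8)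
    (iso : Finset (Fin 4) → Fin 4 → Fin n × Fin n) (I : Finset (Fin 4)) :
    Finset (Fin n × Fin n) :=
  bedg n v edg I ∪ Iᶜ.image (iso I)

/-- For every `I`, the isolated edges `iso I k`, `k ∉ I`, are proper edges,
pairwise vertex-disjoint, vertex-disjoint from `G_{i,I}`, and the resulting
graph `H_{i,I}` lives on (at most) `8` vertices. -/
def GoodIso (n : ℕ) (v : Fin 8 → Fin n) (edg : Fin 4 → Fin 8 × Fin 8)
    (iso : Finset (Fin 4) → Fin 4 → Fin n × Fin n) : Prop :=
  ∀ I : Finset (Fin 4),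
    (∀ k ∉ I, (iso I k).1 ≠ (iso I k).2 ∧
      (iso I k).1 ∉ supp n (bedg n v edg I) ∧
      (iso I k).2 ∉ supp n (bedg n v edg I)) ∧
    (∀ k ∉ I, ∀ k' ∉ I, k ≠ k' →
      Disjoint ({(iso I k).1, (iso I k).2} : Finset (Fin n))
        {(iso I k').1, (iso I k').2}) ∧
    (supp n (Hset n v edg iso I)).card ≤ 8



lemma sum_fn_prod {ι β : Type*} [Fintype ι] [DecidableEq ι] [Fintype β] (f : ι → β → ℝ) :
    ∑ x : ι → β, ∏ i, f i (x i) = ∏ i, ∑ b, f i b := by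
  rw [Finset.prod_univ_sum, Fintype.piFinset_univ]

lemma rho_eq_prod (m : ℕ) (x y : V m) :
    rho m x y = ∏ i : Fin m, if x i ∧ y i then (0:ℝ) else 1 := by
  classical
  unfold rho gfun
  by_cases h : ∃ i : Fin m, x i ∧ y i
  · obtain ⟨i, hi⟩ := h
    rw [if_pos ⟨i, hi⟩, Finset.prod_eq_zero (Finset.mem_univ i) (by simp [hi])]
    ring
  · rw [if_neg h, Finset.prod_eq_one]
    · ring
    · intro i _
      push_neg at h
      rw [if_neg]
      rintro ⟨hx, hy⟩
      exact h i hx hy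

lemma rho1_eq_prod (m : ℕ) (p : ℝ) (x : V m) :
    rho1 m p x = ∏ i : Fin m, if x i then 1 - p else 1 := by
  unfold rho1 bw
  have h : ∀ y : V m, (∏ i : Fin m, if y i then p else 1 - p) * rho m x y
      = ∏ i : Fin m, ((if y i then p else 1 - p) * if x i ∧ y i then (0:ℝ) else 1) := by
    intro y
    rw [rho_eq_prod, ← Finset.prod_mul_distrib]
  rw [Finset.sum_congr rfl (fun y _ => h y),
    sum_fn_prod (f := fun i b => (if b = true then p else 1 - p) *
      if x i = true ∧ b = true then (0:ℝ) else 1)]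
  refine Finset.prod_congr rfl fun i _ => ?_
  rcases Bool.eq_false_or_eq_true (x i) with hb | hb <;>
    rw [Fintype.sum_bool] <;> simp [hb] <;> ring

lemma sum_bw_one (m : ℕ) (p : ℝ) : ∑ x : V m, bw m p x = 1 := by
  unfold bw
  rw [sum_fn_prod (f := fun i b => if b = true then p else 1 - p)]
  refine Finset.prod_eq_one fun i _ => ?_
  rw [Fintype.sum_bool]
  simp

lemma stmt1 (m : ℕ) (p : ℝ) :
    ∑ x : V m, bw m p x * rho1 m p x ^ 4 = (1 - p + p * (1 - p) ^ 4) ^ m := by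
  have key : ∀ x : V m, bw m p x * rho1 m p x ^ 4 =
      ∏ i : Fin m, ((if x i then p else 1 - p) * (if x i then 1 - p else 1) ^ 4) := by
    intro x
    rw [rho1_eq_prod, bw, ← Finset.prod_pow, ← Finset.prod_mul_distrib]
  rw [Finset.sum_congr rfl fun x _ => key x,
    sum_fn_prod (f := fun (i : Fin m) b =>
      (if b = true then p else 1 - p) * (if b = true then 1 - p else 1) ^ 4)]
  have h : ∀ i : Fin m, (∑ b : Bool, (if b = true then p else 1 - p) *
      (if b = true then 1 - p else 1) ^ 4) = 1 - p + p * (1 - p) ^ 4 := by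
    intro i
    rw [Fintype.sum_bool]
    simp
    ring
  rw [Finset.prod_congr rfl fun i _ => h i, Finset.prod_const, Finset.card_univ,
    Fintype.card_fin]

lemma stmt5 (m : ℕ) (p : ℝ) :
    ∑ x : V m, bw m p x * rho1 m p x ^ 2 = (1 - 2 * p ^ 2 + p ^ 3) ^ m := by
  have key : ∀ x : V m, bw m p x * rho1 m p x ^ 2 =
      ∏ i : Fin m, ((if x i then p else 1 - p) * (if x i then 1 - p else 1) ^ 2) := by
    intro x
    rw [rho1_eq_prod, bw, ← Finset.prod_pow, ← Finset.prod_mul_distrib]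
  rw [Finset.sum_congr rfl fun x _ => key x,
    sum_fn_prod (f := fun (i : Fin m) b =>
      (if b = true then p else 1 - p) * (if b = true then 1 - p else 1) ^ 2)]
  have h : ∀ i : Fin m, (∑ b : Bool, (if b = true then p else 1 - p) *
      (if b = true then 1 - p else 1) ^ 2) = 1 - 2 * p ^ 2 + p ^ 3 := by
    intro i
    rw [Fintype.sum_bool]
    simp
    ring
  rw [Finset.prod_congr rfl fun i _ => h i, Finset.prod_const, Finset.card_univ,
    Fintype.card_fin]

lemma stmt3 (m : ℕ) (p : ℝ) :
    ∑ y₁ : V m, ∑ y₂ : V m, bw m p y₁ * bw m p y₂ *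
        (∑ x : V m, bw m p x * rho m x y₁ * rho m x y₂) ^ 2 =
      ((1 - p) ^ 4 + 4 * p * (1 - p) ^ 3 + 2 * p ^ 2 * (1 - p) ^ 2) ^ m := by
  have inner : ∀ y₁ y₂ : V m, (∑ x : V m, bw m p x * rho m x y₁ * rho m x y₂) =
      ∏ i : Fin m, (if y₁ i || y₂ i then 1 - p else 1) := by
    intro y₁ y₂
    have key : ∀ x : V m, bw m p x * rho m x y₁ * rho m x y₂ =
        ∏ i : Fin m, ((if x i then p else 1 - p) * (if x i ∧ y₁ i then (0:ℝ) else 1) *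
          (if x i ∧ y₂ i then (0:ℝ) else 1)) := by
      intro x
      rw [bw, rho_eq_prod, rho_eq_prod, ← Finset.prod_mul_distrib, ← Finset.prod_mul_distrib]
    rw [Finset.sum_congr rfl fun x _ => key x,
      sum_fn_prod (f := fun i a => (if a = true then p else 1 - p) *
        (if a = true ∧ y₁ i = true then (0:ℝ) else 1) *
        (if a = true ∧ y₂ i = true then (0:ℝ) else 1))]
    refine Finset.prod_congr rfl fun i _ => ?_
    rcases Bool.eq_false_or_eq_true (y₁ i) with h1 | h1 <;>
      rcases Bool.eq_false_or_eq_true (y₂ i) with h2 | h2 <;>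
        rw [Fintype.sum_bool] <;> simp [h1, h2] <;> ring
  have key2 : ∀ y₁ y₂ : V m, bw m p y₁ * bw m p y₂ *
      (∏ i : Fin m, (if y₁ i || y₂ i then 1 - p else 1)) ^ 2 =
      ∏ i : Fin m, ((if y₁ i then p else 1 - p) * (if y₂ i then p else 1 - p) *
        (if y₁ i || y₂ i then 1 - p else 1) ^ 2) := by
    intro y₁ y₂
    rw [bw, bw, ← Finset.prod_pow, ← Finset.prod_mul_distrib, ← Finset.prod_mul_distrib]
  have step1 : ∀ y₁ : V m, (∑ y₂ : V m, bw m p y₁ * bw m p y₂ *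
      (∑ x : V m, bw m p x * rho m x y₁ * rho m x y₂) ^ 2) =
      ∏ i : Fin m, ∑ c : Bool, ((if y₁ i then p else 1 - p) * (if c then p else 1 - p) *
        (if y₁ i || c then 1 - p else 1) ^ 2) := by
    intro y₁
    have : ∀ y₂ : V m, bw m p y₁ * bw m p y₂ *
        (∑ x : V m, bw m p x * rho m x y₁ * rho m x y₂) ^ 2 =
        ∏ i : Fin m, ((if y₁ i then p else 1 - p) * (if y₂ i then p else 1 - p) *
          (if y₁ i || y₂ i then 1 - p else 1) ^ 2) := by
      intro y₂; rw [inner y₁ y₂, key2 y₁ y₂]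
    rw [Finset.sum_congr rfl fun y₂ _ => this y₂,
      sum_fn_prod (f := fun i c => (if y₁ i = true then p else 1 - p) *
        (if c = true then p else 1 - p) * (if (y₁ i || c) = true then 1 - p else 1) ^ 2)]
  rw [Finset.sum_congr rfl fun y₁ _ => step1 y₁,
    sum_fn_prod (f := fun (i : Fin m) b => ∑ c : Bool, ((if b = true then p else 1 - p) *
      (if c = true then p else 1 - p) * (if (b || c) = true then 1 - p else 1) ^ 2))]
  have h : ∀ i : Fin m, (∑ b : Bool, ∑ c : Bool, ((if b = true then p else 1 - p) *
      (if c = true then p else 1 - p) * (if (b || c) = true then 1 - p else 1) ^ 2)) =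
      (1 - p) ^ 4 + 4 * p * (1 - p) ^ 3 + 2 * p ^ 2 * (1 - p) ^ 2 := by
    intro i
    rw [Fintype.sum_bool, Fintype.sum_bool, Fintype.sum_bool]
    simp
    ring
  rw [Finset.prod_congr rfl fun i _ => h i, Finset.prod_const, Finset.card_univ,
    Fintype.card_fin]

lemma stmt4 (m : ℕ) (p : ℝ) :
    ∑ y : V m, bw m p y * (∑ x : V m, bw m p x * rho1 m p x * rho m x y) ^ 2 =
      ((1 - p) ^ 5 + 5 * p * (1 - p) ^ 4 + 6 * p ^ 2 * (1 - p) ^ 3 +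
        p ^ 3 * (1 - p) ^ 2) ^ m := by
  have inner : ∀ y : V m, (∑ x : V m, bw m p x * rho1 m p x * rho m x y) =
      ∏ i : Fin m, (if y i then 1 - p else 1 - p ^ 2) := by
    intro y
    have key : ∀ x : V m, bw m p x * rho1 m p x * rho m x y =
        ∏ i : Fin m, ((if x i then p else 1 - p) * (if x i then 1 - p else 1) *
          (if x i ∧ y i then (0:ℝ) else 1)) := by
      intro x
      rw [bw, rho1_eq_prod, rho_eq_prod, ← Finset.prod_mul_distrib, ← Finset.prod_mul_distrib]
    rw [Finset.sum_congr rfl fun x _ => key x,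
      sum_fn_prod (f := fun i a => (if a = true then p else 1 - p) *
        (if a = true then 1 - p else 1) * (if a = true ∧ y i = true then (0:ℝ) else 1))]
    refine Finset.prod_congr rfl fun i _ => ?_
    rcases Bool.eq_false_or_eq_true (y i) with h1 | h1 <;>
      rw [Fintype.sum_bool] <;> simp [h1] <;> ring
  have key2 : ∀ y : V m, bw m p y * (∏ i : Fin m, (if y i then 1 - p else 1 - p ^ 2)) ^ 2 =
      ∏ i : Fin m, ((if y i then p else 1 - p) * (if y i then 1 - p else 1 - p ^ 2) ^ 2) := by
    intro y
    rw [bw, ← Finset.prod_pow, ← Finset.prod_mul_distrib]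
  have step : ∀ y : V m, bw m p y * (∑ x : V m, bw m p x * rho1 m p x * rho m x y) ^ 2 =
      ∏ i : Fin m, ((if y i then p else 1 - p) * (if y i then 1 - p else 1 - p ^ 2) ^ 2) := by
    intro y; rw [inner y, key2 y]
  rw [Finset.sum_congr rfl fun y _ => step y,
    sum_fn_prod (f := fun (i : Fin m) b => (if b = true then p else 1 - p) *
      (if b = true then 1 - p else 1 - p ^ 2) ^ 2)]
  have h : ∀ i : Fin m, (∑ b : Bool, (if b = true then p else 1 - p) *
      (if b = true then 1 - p else 1 - p ^ 2) ^ 2) =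
      (1 - p) ^ 5 + 5 * p * (1 - p) ^ 4 + 6 * p ^ 2 * (1 - p) ^ 3 + p ^ 3 * (1 - p) ^ 2 := by
    intro i
    rw [Fintype.sum_bool]
    simp
    ring
  rw [Finset.prod_congr rfl fun i _ => h i, Finset.prod_const, Finset.card_univ,
    Fintype.card_fin]

lemma margSum {n m : ℕ} (p : ℝ) {r : ℕ} (v : Fin r → Fin n) (hv : Function.Injective v)
    (G : (Fin r → V m) → ℝ) :
    ∑ ω : Om n m, Wt n m p ω * G (ω ∘ v) =
      ∑ x : Fin r → V m, (∏ j, bw m p (x j)) * G x := by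
  classical
  let P : Fin n → Prop := fun j => ∃ k, v k = j
  let e := Equiv.piEquivPiSubtypeProd P (fun _ => V m)
  rw [← Equiv.sum_comp e.symm (fun ω => Wt n m p ω * G (ω ∘ v)), Fintype.sum_prod_type]
  have hW : ∀ (a : {j // P j} → V m) (b : {j // ¬ P j} → V m),
      Wt n m p (e.symm (a, b)) =
        (∏ j : {j // P j}, bw m p (a j)) * ∏ j : {j // ¬ P j}, bw m p (b j) := by
    intro a b
    rw [Wt, ← Fintype.prod_subtype_mul_prod_subtype P (fun k => bw m p (e.symm (a, b) k))]
    congr 1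
    · refine Finset.prod_congr rfl fun j _ => ?_
      congr 1
      show (if h : P j.1 then a ⟨j.1, h⟩ else b ⟨j.1, h⟩) = a j
      rw [dif_pos j.2]
    · refine Finset.prod_congr rfl fun j _ => ?_
      congr 1
      show (if h : P j.1 then a ⟨j.1, h⟩ else b ⟨j.1, h⟩) = b j
      rw [dif_neg j.2]
  have hG : ∀ (a : {j // P j} → V m) (b : {j // ¬ P j} → V m),
      (e.symm (a, b)) ∘ v = fun k => a ⟨v k, ⟨k, rfl⟩⟩ := by
    intro a b
    funext k
    show (if h : P (v k) then a ⟨v k, h⟩ else b ⟨v k, h⟩) = a ⟨v k, ⟨k, rfl⟩⟩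
    rw [dif_pos ⟨k, rfl⟩]
  have step : ∀ (a : {j // P j} → V m),
      (∑ b : {j // ¬ P j} → V m, Wt n m p (e.symm (a, b)) * G ((e.symm (a, b)) ∘ v)) =
        ((∏ j : {j // P j}, bw m p (a j)) * G (fun k => a ⟨v k, ⟨k, rfl⟩⟩)) *
          ∑ b : {j // ¬ P j} → V m, ∏ j : {j // ¬ P j}, bw m p (b j) := by
    intro a
    rw [Finset.mul_sum]
    refine Finset.sum_congr rfl fun b _ => ?_
    rw [hW a b, hG a b]
    ring
  rw [Finset.sum_congr rfl fun a _ => step a]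
  have hone : (∑ b : {j // ¬ P j} → V m, ∏ j : {j // ¬ P j}, bw m p (b j)) = 1 := by
    rw [sum_fn_prod (f := fun (j : {j // ¬ P j}) (t : V m) => bw m p t)]
    exact Finset.prod_eq_one fun j _ => sum_bw_one m p
  rw [Finset.sum_congr rfl fun a _ => by rw [hone, mul_one]]
  have hmem : ∀ j : {j // P j}, ∃ k, v k = j.1 := fun j => j.2
  choose c hc using hmem
  have hck : ∀ (k : Fin r) (h : P (v k)), c ⟨v k, h⟩ = k := by
    intro k h
    apply hv
    rw [hc]
  have hebij : Function.Bijective (fun k : Fin r => (⟨v k, ⟨k, rfl⟩⟩ : {j // P j})) := by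
    constructor
    · intro k k' hkk'
      exact hv (congrArg Subtype.val hkk')
    · intro j
      exact ⟨c j, Subtype.ext (hc j)⟩
  have hpsibij : Function.Bijective
      (fun (a : {j // P j} → V m) => (fun k => a ⟨v k, ⟨k, rfl⟩⟩ : Fin r → V m)) := by
    constructor
    · intro a a' haa'
      funext j
      have h1 : (⟨v (c j), ⟨c j, rfl⟩⟩ : {j // P j}) = j := Subtype.ext (hc j)
      calc a j = a ⟨v (c j), ⟨c j, rfl⟩⟩ := by rw [h1]
        _ = a' ⟨v (c j), ⟨c j, rfl⟩⟩ := congrFun haa' (c j)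
        _ = a' j := by rw [h1]
    · intro x
      refine ⟨fun j => x (c j), ?_⟩
      funext k
      simp only [hck k ⟨k, rfl⟩]
  refine Fintype.sum_bijective _ hpsibij
    (fun a => (∏ j : {j // P j}, bw m p (a j)) * G (fun k => a ⟨v k, ⟨k, rfl⟩⟩))
    (fun x => (∏ j, bw m p (x j)) * G x) fun a => ?_
  exact congrArg (fun z : ℝ => z * G fun k => a ⟨v k, ⟨k, rfl⟩⟩)
    (Fintype.prod_bijective _ hebij
      (fun k => bw m p (a ⟨v k, ⟨k, rfl⟩⟩)) (fun j => bw m p (a j)) fun k => rfl).symm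

lemma stmt2 (m : ℕ) (p : ℝ) (n : ℕ) (v : Fin 5 → Fin n) (hv : Function.Injective v) :
    Pr n m p {ω | ∀ k : Fin 4,
        ¬∃ a : Fin m, ω (v 0) a ∧ ω (v ⟨(k : ℕ) + 1, Nat.add_lt_add_right k.isLt 1⟩) a} =
      ∑ x : V m, bw m p x * rho1 m p x ^ 4 := by
  classical
  set G : (Fin 5 → V m) → ℝ :=
    fun x => ∏ k : Fin 4, rho m (x 0) (x ⟨(k : ℕ) + 1, by omega⟩) with hGdef
  have hval : ∀ ω : Om n m,
      Set.indicator {ω : Om n m | ∀ k : Fin 4,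
          ¬∃ a : Fin m, ω (v 0) a ∧ ω (v ⟨(k : ℕ) + 1, by omega⟩) a}
        (Wt n m p) ω = Wt n m p ω * G (ω ∘ v) := by
    intro ω
    by_cases hω : ω ∈ {ω : Om n m | ∀ k : Fin 4,
        ¬∃ a : Fin m, ω (v 0) a ∧ ω (v ⟨(k : ℕ) + 1, by omega⟩) a}
    · rw [Set.indicator_of_mem hω]
      have hG1 : G (ω ∘ v) = 1 := by
        refine Finset.prod_eq_one fun k _ => ?_
        unfold rho gfun
        rw [if_neg]
        · ring
        · exact hω k
      rw [hG1, mul_one]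
    · rw [Set.indicator_of_notMem hω]
      simp only [Set.mem_setOf_eq, not_forall, not_not] at hω
      obtain ⟨k, hk⟩ := hω
      have hG0 : G (ω ∘ v) = 0 := by
        refine Finset.prod_eq_zero (Finset.mem_univ k) ?_
        unfold rho gfun
        rw [if_pos]
        · ring
        · exact hk
      rw [hG0, mul_zero]
  rw [Pr, Finset.sum_congr rfl fun ω _ => hval ω, margSum p v hv G]
  have hcons : ∀ (t : V m) (y : Fin 4 → V m) (k : Fin 4),
      Fin.cons (α := fun _ : Fin 5 => V m) t y (⟨(k : ℕ) + 1, by omega⟩ : Fin 5) = y k := by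
    intro t y k
    rw [show (⟨(k : ℕ) + 1, by omega⟩ : Fin 5) = Fin.succ k from rfl, Fin.cons_succ]
  rw [← Equiv.sum_comp (Fin.consEquiv (fun _ : Fin 5 => V m))
    (fun x => (∏ j, bw m p (x j)) * G x), Fintype.sum_prod_type]
  refine Finset.sum_congr rfl fun t _ => ?_
  have hterm : ∀ y : Fin 4 → V m,
      (∏ j : Fin 5, bw m p (Fin.cons (α := fun _ : Fin 5 => V m) t y j)) * G (Fin.cons (α := fun _ : Fin 5 => V m) t y) =
        bw m p t * ∏ k : Fin 4, (bw m p (y k) * rho m t (y k)) := by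
    intro y
    rw [Fin.prod_univ_succ]
    simp only [Fin.cons_zero, Fin.cons_succ]
    rw [hGdef]
    simp only [Fin.cons_zero, hcons]
    rw [Finset.prod_mul_distrib]
    ring
  calc ∑ y : Fin 4 → V m, (∏ j : Fin 5, bw m p ((Fin.consEquiv fun _ : Fin 5 => V m) (t, y) j)) *
        G ((Fin.consEquiv fun _ : Fin 5 => V m) (t, y))
      = ∑ y : Fin 4 → V m, bw m p t * ∏ k : Fin 4, (bw m p (y k) * rho m t (y k)) :=
        Finset.sum_congr rfl fun y _ => hterm y
    _ = bw m p t * ∑ y : Fin 4 → V m, ∏ k : Fin 4, (bw m p (y k) * rho m t (y k)) := by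
        rw [Finset.mul_sum]
    _ = bw m p t * rho1 m p t ^ 4 := by
        rw [sum_fn_prod (f := fun (k : Fin 4) (s : V m) => bw m p s * rho m t s)]
        rw [Finset.prod_const, Finset.card_univ, Fintype.card_fin, rho1]


/-- exact values of the contraction integrals for the complement
kernel `ρ = 1 - g` (Lemma 7.3). -/
theorem stmt15 (m : ℕ) (p : ℝ) (hp0 : 0 < p) (hp1 : p < 1) :
    (∑ x : V m, bw m p x * rho1 m p x ^ 4 =
        (1 - p + p * (1 - p) ^ 4) ^ m) ∧
    (∀ (n : ℕ) (v : Fin 5 → Fin n), Function.Injective v →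
      Pr n m p {ω | ∀ k : Fin 4,
          ¬∃ a : Fin m, ω (v 0) a ∧ ω (v ⟨(k : ℕ) + 1, by omega⟩) a} =
        (1 - p + p * (1 - p) ^ 4) ^ m) ∧
    (∑ y₁ : V m, ∑ y₂ : V m, bw m p y₁ * bw m p y₂ *
          (∑ x : V m, bw m p x * rho m x y₁ * rho m x y₂) ^ 2 =
        ((1 - p) ^ 4 + 4 * p * (1 - p) ^ 3 + 2 * p ^ 2 * (1 - p) ^ 2) ^ m) ∧
    (∑ y : V m, bw m p y *
          (∑ x : V m, bw m p x * rho1 m p x * rho m x y) ^ 2 =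
        ((1 - p) ^ 5 + 5 * p * (1 - p) ^ 4 + 6 * p ^ 2 * (1 - p) ^ 3 +
            p ^ 3 * (1 - p) ^ 2) ^ m) ∧
    (∑ x : V m, bw m p x * rho1 m p x ^ 2 = (1 - 2 * p ^ 2 + p ^ 3) ^ m) := by
  exact ⟨stmt1 m p, fun n v hv => (stmt2 m p n v hv).trans (stmt1 m p),
    stmt3 m p, stmt4 m p, stmt5 m p⟩

end

end RIG
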